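/- Let v₀ = (1,0), v₁ = (1/√3)(1,√2) ∈ ℂ², let ζ be a complex number with |ζ| = 1, and set v₂ = D v₁, v₃ = D² v₁ where D = diag(1, ζ). Then {v₀,v₁,v₂,v₃} is a SIC-POVM (all pairwise inner products have absolute value 1/√3) if and only if ζ is a primitive cube root of unity. -/

import Mathlib

/-!
Put `w z = (1, √2 z) / √3`; then `v₁ = w 1` and `Dⁿ v₁ = w ζⁿ`. Each `w z` has overlap `1/√3`
with `v₀`, and for `|z| = |z'| = 1` it is a unit vector with `⟨w z, w z'⟩ = (1 + 2u) / 3`,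
`u = z̄ z'`. As `|1 + 2u|² = 5 + 4 Re u` on the unit circle, this overlap has modulus `1/√3`
iff `Re u = -1/2`, iff `u² + u + 1 = 0`, iff `z² + z z' + z'² = 0`; for the pairs among
`1, ζ, ζ²` all of these reduce to `1 + ζ + ζ² = 0`.
-/

open Matrix Complex

noncomputable def v₀ : Fin 2 → ℂ := ![1, 0]
noncomputable def v₁ : Fin 2 → ℂ :=
  ((Real.sqrt 3 : ℂ)⁻¹) • ![1, (Real.sqrt 2 : ℂ)]

open ComplexConjugate

noncomputable def sicVec (z : ℂ) : Fin 2 → ℂ := ((Real.sqrt 3 : ℂ)⁻¹) • ![1, Real.sqrt 2 * z]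

lemma v₁_eq_sicVec : v₁ = sicVec 1 := by simp [v₁, sicVec]

lemma diagonal_mulVec_sicVec (ζ z : ℂ) : diagonal ![1, ζ] *ᵥ sicVec z = sicVec (ζ * z) := by
  ext i; fin_cases i <;> simp [sicVec, mulVec_diagonal, mul_left_comm]

lemma star_v₀_dotProduct_v₀ : star v₀ ⬝ᵥ v₀ = 1 := by simp [v₀, dotProduct]

lemma norm_star_v₀_dotProduct_sicVec (z : ℂ) : ‖star v₀ ⬝ᵥ sicVec z‖ = (Real.sqrt 3)⁻¹ := by
  simp [v₀, sicVec, dotProduct]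

lemma norm_star_sicVec_dotProduct_v₀ (z : ℂ) : ‖star (sicVec z) ⬝ᵥ v₀‖ = (Real.sqrt 3)⁻¹ := by
  simp [v₀, sicVec, dotProduct]

lemma star_sicVec_dotProduct_sicVec (z z' : ℂ) :
    star (sicVec z) ⬝ᵥ sicVec z' = (1 + 2 * (conj z * z')) / 3 := by
  have h2 : ((Real.sqrt 2 : ℝ) : ℂ) ^ 2 = 2 := by norm_cast; simp
  have h3 : ((Real.sqrt 3 : ℝ) : ℂ) ^ 2 = 3 := by norm_cast; simp
  simp only [sicVec, dotProduct, Fin.sum_univ_two, smul_cons, smul_eq_mul, smul_empty,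
    Pi.star_apply, RCLike.star_def, Pi.smul_apply, cons_val_zero, cons_val_one, cons_val_fin_one,
    map_inv₀, map_mul, conj_ofReal, mul_one]
  field_simp
  linear_combination 3 * conj z * z' * h2 - (1 + 2 * conj z * z') * h3

lemma star_sicVec_dotProduct_self {z : ℂ} (hz : ‖z‖ = 1) : star (sicVec z) ⬝ᵥ sicVec z = 1 := by
  rw [star_sicVec_dotProduct_sicVec, ← normSq_eq_conj_mul_self, normSq_eq_norm_sq, hz]
  norm_num

lemma norm_one_add_two_mul_sq {u : ℂ} (hu : ‖u‖ = 1) : ‖1 + 2 * u‖ ^ 2 = 5 + 4 * u.re := by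
  have hu2 : u.re ^ 2 + u.im ^ 2 = 1 := by
    simpa only [sq, normSq_apply, hu, mul_one] using (Complex.sq_norm u).symm
  rw [Complex.sq_norm, normSq_apply]
  simp only [add_re, add_im, one_re, one_im, mul_re, mul_im, re_ofNat, im_ofNat]
  linear_combination 4 * hu2

lemma norm_one_add_two_mul_eq_sqrt_three_iff {u : ℂ} (hu : ‖u‖ = 1) :
    ‖1 + 2 * u‖ = Real.sqrt 3 ↔ u ^ 2 + u + 1 = 0 := by
  have hu0 : u ≠ 0 := by rintro rfl; simp at hu
  have hconj : u * conj u = 1 := by rw [mul_conj, normSq_eq_norm_sq, hu]; norm_num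
  -- on the unit circle, `u ^ 2 + u + 1 = u * (u + conj u + 1)`
  have hfactor : u ^ 2 + u + 1 = u * ((2 * u.re + 1 : ℝ) : ℂ) := by
    have hre := add_conj u
    push_cast at hre ⊢
    linear_combination u * hre - hconj
  rw [hfactor, mul_eq_zero, ofReal_eq_zero, or_iff_right hu0,
    ← sq_eq_sq₀ (norm_nonneg _) (Real.sqrt_nonneg 3), norm_one_add_two_mul_sq hu,
    Real.sq_sqrt (by norm_num : (0:ℝ) ≤ 3)]
  constructor <;> intro h <;> linarith

lemma norm_star_sicVec_dotProduct_sicVec_eq_iff {z z' : ℂ} (hz : ‖z‖ = 1) (hz' : ‖z'‖ = 1) :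
    ‖star (sicVec z) ⬝ᵥ sicVec z'‖ = (Real.sqrt 3)⁻¹ ↔ z ^ 2 + z * z' + z' ^ 2 = 0 := by
  have hz0 : z ≠ 0 := by rintro rfl; simp at hz
  have hconj : z * conj z = 1 := by rw [mul_conj, normSq_eq_norm_sq, hz]; norm_num
  have hsqrt : (Real.sqrt 3)⁻¹ * 3 = Real.sqrt 3 := by
    rw [inv_mul_eq_div, Real.div_sqrt]
  rw [star_sicVec_dotProduct_sicVec, norm_div, div_eq_iff (by norm_num), RCLike.norm_ofNat, hsqrt,
    norm_one_add_two_mul_eq_sqrt_three_iff (by simp [hz, hz']),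
    ← mul_right_inj' (pow_ne_zero 2 hz0), mul_zero]
  constructor <;> intro h
  · linear_combination h - ((z * conj z + 1) * z' ^ 2 + z * z') * hconj
  · linear_combination h + ((z * conj z + 1) * z' ^ 2 + z * z') * hconj

lemma pow_three_eq_one_and_ne_one_iff {R : Type*} [CommRing R] [IsDomain R] [NeZero (3 : R)]
    {ζ : R} : ζ ^ 3 = 1 ∧ ζ ≠ 1 ↔ 1 + ζ + ζ ^ 2 = 0 := by
  have hfactor : ζ ^ 3 - 1 = (ζ - 1) * (1 + ζ + ζ ^ 2) := by ring
  constructor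
  · rintro ⟨h3, h1⟩
    rw [sub_eq_zero.2 h3, eq_comm, mul_eq_zero, sub_eq_zero] at hfactor
    exact hfactor.resolve_left h1
  · intro h
    refine ⟨by rw [← sub_eq_zero, hfactor, h, mul_zero], ?_⟩
    rintro rfl
    exact NeZero.ne (3 : R) (by linear_combination h)

theorem stmt10 (ζ : ℂ) (hζ : ‖ζ‖ = 1)
    (D : Matrix (Fin 2) (Fin 2) ℂ) (hD : D = Matrix.diagonal ![1, ζ])
    (V : Fin 4 → (Fin 2 → ℂ))
    (hV : V = ![v₀, v₁, D.mulVec v₁, (D ^ 2).mulVec v₁]) :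
    ((∀ j : Fin 4, star (V j) ⬝ᵥ V j = 1) ∧
      (∀ j k : Fin 4, j ≠ k →
        ‖star (V j) ⬝ᵥ V k‖ = (Real.sqrt 3)⁻¹)) ↔
      (ζ ^ 3 = 1 ∧ ζ ≠ 1) := by
  obtain rfl : V = ![v₀, sicVec 1, sicVec ζ, sicVec (ζ ^ 2)] := by
    rw [hV, hD, v₁_eq_sicVec, pow_two, ← mulVec_mulVec, diagonal_mulVec_sicVec,
      diagonal_mulVec_sicVec, mul_one, ← pow_two]
  have hζ2 : ‖ζ ^ 2‖ = 1 := by simp [hζ]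
  rw [pow_three_eq_one_and_ne_one_iff]
  constructor
  · rintro ⟨-, h⟩
    simpa using (norm_star_sicVec_dotProduct_sicVec_eq_iff norm_one hζ).1 (h 1 2 (by decide))
  · intro h
    refine ⟨fun j => ?_, fun j k hjk => ?_⟩
    · fin_cases j
      exacts [star_v₀_dotProduct_v₀, star_sicVec_dotProduct_self norm_one,
        star_sicVec_dotProduct_self hζ, star_sicVec_dotProduct_self hζ2]
    -- the remaining conditions are `1 + ζ + ζ²` times `1`, `1 - ζ + ζ²` or `ζ²`
    · fin_cases j <;> fin_cases k <;> first
        | exact absurd rfl hjk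
        | simp only [Fin.zero_eta, Fin.mk_one, Fin.reduceFinMk, Matrix.cons_val,
            norm_star_v₀_dotProduct_sicVec, norm_star_sicVec_dotProduct_v₀,
            norm_star_sicVec_dotProduct_sicVec_eq_iff, norm_one, hζ, hζ2] <;>
          grind
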